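/- Let g be a short sl₂-Lie superalgebra. Then the triple product (m,n,r) := −[[m, f n], r] on M = {α ∈ g : hα = α} satisfies the super Jordan-triple-like identity: (m,n,(r,s,t)) = ((m,n,r),s,t) + (−1)^{|r|(|m|+|n|)+|m||n|}(r,(n,m,s),t) + (−1)^{(|m|+|n|)(|r|+|s|)}(r,s,(m,n,t)) for all homogeneous m,n,r,s,t ∈ M. -/

import Mathlib

/-! Put `a = [m, f n]` and `y = [r, f s]`. Two applications of the super Jacobi identity expand
`[a, [y, t]]` into the three terms of the identity, except that the middle one contains
`[a, f s]` where `f [[n, f m], s]` is wanted. These agree because `[a, f s]` has weight `-1`: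
since the weights `±3` do not occur, `e` kills weight `1` and `f` kills weight `-1`, so `f ∘ e` is
the identity in weight `-1`; and `e [a, f s] = [[m, n], f s] + [a, s] = -[[f m, n], s]` because
`f` kills the weight-`3` vector `[[m, n], s] = 0`. -/

/-- The Koszul sign `(-1)^{ij}` for parities `i j : ZMod 2`. -/
noncomputable def sg (i j : ZMod 2) : ℂ := (-1 : ℂ) ^ (i.val * j.val)

/-- A short `sl₂`-Lie superalgebra: a Z/2-graded complex Lie superalgebra `(G, B)`
together with operators `E F H` satisfying the `sl₂` relations, acting by even
derivations, such that `G` is spanned by `H`-eigenvectors with eigenvalues in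
`{-2,-1,0,1,2}` (which, over `ℂ`, is exactly the condition that `G` decomposes as an
`sl₂`-module into copies of the adjoint, the natural and the trivial representations,
i.e. `G ≅ sl₂⊗J ⊕ V⊗M ⊕ D`). -/
structure ShortSL2 {G : Type} [AddCommGroup G] [Module ℂ G]
    (gr : ZMod 2 → Submodule ℂ G)
    (B : G →ₗ[ℂ] G →ₗ[ℂ] G)
    (E F H : G →ₗ[ℂ] G) : Prop where
  bracket_grade : ∀ i j : ZMod 2, ∀ a ∈ gr i, ∀ b ∈ gr j, B a b ∈ gr (i + j)
  antisymm : ∀ i j : ZMod 2, ∀ a ∈ gr i, ∀ b ∈ gr j, B a b = -(sg i j • B b a)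
  jacobi : ∀ i j : ZMod 2, ∀ a ∈ gr i, ∀ b ∈ gr j, ∀ c : G,
      B a (B b c) = B (B a b) c + sg i j • B b (B a c)
  grade_spans : ∀ x : G, ∃ x0 x1 : G, x0 ∈ gr 0 ∧ x1 ∈ gr 1 ∧ x = x0 + x1
  rel_HE : H ∘ₗ E - E ∘ₗ H = 2 • E
  rel_HF : H ∘ₗ F - F ∘ₗ H = -(2 • F)
  rel_EF : E ∘ₗ F - F ∘ₗ E = H
  derE : ∀ x y : G, E (B x y) = B (E x) y + B x (E y)
  derF : ∀ x y : G, F (B x y) = B (F x) y + B x (F y)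
  derH : ∀ x y : G, H (B x y) = B (H x) y + B x (H y)
  evenE : ∀ i : ZMod 2, ∀ x ∈ gr i, E x ∈ gr i
  evenF : ∀ i : ZMod 2, ∀ x ∈ gr i, F x ∈ gr i
  evenH : ∀ i : ZMod 2, ∀ x ∈ gr i, H x ∈ gr i
  short : ∀ x : G, ∃ x2 x1 x0 y1 y2 : G,
      H x2 = (2 : ℂ) • x2 ∧ H x1 = x1 ∧ H x0 = 0 ∧
      H y1 = (-1 : ℂ) • y1 ∧ H y2 = (-2 : ℂ) • y2 ∧ x = x2 + x1 + x0 + y1 + y2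

/-- The triple product `(m,n,r) := −[[m, f n], r]` on `M = {m : H m = m}`. -/
noncomputable def trip {G : Type} [AddCommGroup G] [Module ℂ G]
    (B : G →ₗ[ℂ] G →ₗ[ℂ] G) (F : G →ₗ[ℂ] G) (m n r : G) : G :=
  -(B (B m (F n)) r)

lemma sg_comm (i j : ZMod 2) : sg i j = sg j i := by
  rw [sg, sg, Nat.mul_comm]

theorem Module.End.eq_zero_of_apply_eq_smul_of_notMem {K V : Type*} [Field K] [AddCommGroup V]
    [Module K V] {f : Module.End K V} {S : Set K} (hS : ⨆ μ ∈ S, f.eigenspace μ = ⊤) {c : K}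
    (hc : c ∉ S) {v : V} (hv : f v = c • v) : v = 0 :=
  Submodule.disjoint_def.mp (f.eigenspaces_iSupIndep.disjoint_biSup hc) v
    (Module.End.mem_eigenspace_iff.mpr hv) (hS ▸ Submodule.mem_top)

namespace ShortSL2

variable {G : Type} [AddCommGroup G] [Module ℂ G] {gr : ZMod 2 → Submodule ℂ G}
  {B : G →ₗ[ℂ] G →ₗ[ℂ] G} {E F H : G →ₗ[ℂ] G}

lemma iSup_eigenspace_eq_top (h : ShortSL2 gr B E F H) :
    ⨆ μ ∈ ({2, 1, 0, -1, -2} : Set ℂ), Module.End.eigenspace H μ = ⊤ := by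
  refine eq_top_iff.mpr fun x _ => ?_
  have mem : ∀ μ ∈ ({2, 1, 0, -1, -2} : Set ℂ), ∀ y : G, H y = μ • y →
      y ∈ ⨆ μ ∈ ({2, 1, 0, -1, -2} : Set ℂ), Module.End.eigenspace H μ := fun μ hμ y hy =>
    le_biSup (Module.End.eigenspace H) hμ (Module.End.mem_eigenspace_iff.mpr hy)
  obtain ⟨x2, x1, x0, y1, y2, h2, h1, h0, hm1, hm2, rfl⟩ := h.short x
  refine add_mem (add_mem (add_mem (add_mem ?_ ?_) ?_) ?_) ?_
  · exact mem 2 (by simp) x2 h2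
  · exact mem 1 (by simp) x1 (by rw [h1, one_smul])
  · exact mem 0 (by simp) x0 (by rw [h0, zero_smul])
  · exact mem (-1) (by simp) y1 hm1
  · exact mem (-2) (by simp) y2 hm2

lemma eq_zero_of_apply_eq_smul (h : ShortSL2 gr B E F H) {c : ℂ}
    (hc : c ∉ ({2, 1, 0, -1, -2} : Set ℂ)) {v : G} (hv : H v = c • v) : v = 0 :=
  Module.End.eq_zero_of_apply_eq_smul_of_notMem h.iSup_eigenspace_eq_top hc hv

lemma H_E_apply (h : ShortSL2 gr B E F H) (x : G) : H (E x) = E (H x) + (2 : ℂ) • E x := by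
  have := LinearMap.congr_fun h.rel_HE x
  simp only [LinearMap.sub_apply, LinearMap.comp_apply, LinearMap.smul_apply] at this
  rw [sub_eq_iff_eq_add'.mp this, two_smul, two_smul]

lemma H_F_apply (h : ShortSL2 gr B E F H) (x : G) : H (F x) = F (H x) - (2 : ℂ) • F x := by
  have := LinearMap.congr_fun h.rel_HF x
  simp only [LinearMap.sub_apply, LinearMap.comp_apply, LinearMap.neg_apply,
    LinearMap.smul_apply] at this
  rw [sub_eq_iff_eq_add'.mp this, two_smul, two_smul, ← sub_eq_add_neg]

lemma E_F_apply (h : ShortSL2 gr B E F H) (x : G) : E (F x) = F (E x) + H x := by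
  have := LinearMap.congr_fun h.rel_EF x
  simp only [LinearMap.sub_apply, LinearMap.comp_apply] at this
  rw [sub_eq_iff_eq_add'.mp this]

lemma H_E_of_apply_eq_smul (h : ShortSL2 gr B E F H) {a : ℂ} {x : G} (hx : H x = a • x) :
    H (E x) = (a + 2) • E x := by
  rw [h.H_E_apply, hx, map_smul, add_smul]

lemma H_F_of_apply_eq_smul (h : ShortSL2 gr B E F H) {a : ℂ} {x : G} (hx : H x = a • x) :
    H (F x) = (a - 2) • F x := by
  rw [h.H_F_apply, hx, map_smul, sub_smul]

lemma H_bracket_of_apply_eq_smul (h : ShortSL2 gr B E F H) {a b : ℂ} {x y : G}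
    (hx : H x = a • x) (hy : H y = b • y) : H (B x y) = (a + b) • B x y := by
  rw [h.derH, hx, hy, map_smul, LinearMap.smul_apply, map_smul, add_smul]

lemma E_eq_zero_of_apply_eq_self (h : ShortSL2 gr B E F H) {m : G} (hm : H m = m) : E m = 0 :=
  h.eq_zero_of_apply_eq_smul (c := 1 + 2) (by norm_num)
    (h.H_E_of_apply_eq_smul (by rwa [one_smul]))

lemma F_eq_zero_of_apply_eq_neg (h : ShortSL2 gr B E F H) {v : G} (hv : H v = -v) : F v = 0 :=
  h.eq_zero_of_apply_eq_smul (c := -1 - 2) (by norm_num)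
    (h.H_F_of_apply_eq_smul (by rwa [neg_one_smul]))

lemma E_F_of_apply_eq_self (h : ShortSL2 gr B E F H) {m : G} (hm : H m = m) : E (F m) = m := by
  rw [h.E_F_apply, h.E_eq_zero_of_apply_eq_self hm, map_zero, zero_add, hm]

lemma F_E_of_apply_eq_neg (h : ShortSL2 gr B E F H) {v : G} (hv : H v = -v) : F (E v) = v := by
  have := h.E_F_apply v
  rw [h.F_eq_zero_of_apply_eq_neg hv, map_zero, hv, eq_comm] at this
  exact add_neg_eq_zero.mp this

lemma bracket_bracket_eq_zero (h : ShortSL2 gr B E F H) {m n s : G}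
    (hm : H m = m) (hn : H n = n) (hs : H s = s) : B (B m n) s = 0 :=
  h.eq_zero_of_apply_eq_smul (c := 1 + 1 + 1) (by norm_num)
    (h.H_bracket_of_apply_eq_smul
      (h.H_bracket_of_apply_eq_smul (by rwa [one_smul]) (by rwa [one_smul])) (by rwa [one_smul]))

lemma bracket_bracket_F_F (h : ShortSL2 gr B E F H) {pm pn : ZMod 2} {m n s : G}
    (hmg : m ∈ gr pm) (hng : n ∈ gr pn) (hm : H m = m) (hn : H n = n) (hs : H s = s) :
    B (B m (F n)) (F s) = sg pm pn • F (B (B n (F m)) s) := by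
  have hL : H (B (B m (F n)) (F s)) = -B (B m (F n)) (F s) := by
    rw [h.H_bracket_of_apply_eq_smul (h.H_bracket_of_apply_eq_smul (a := 1) (by rwa [one_smul])
      (h.H_F_of_apply_eq_smul (by rwa [one_smul]))) (h.H_F_of_apply_eq_smul (by rwa [one_smul]))]
    norm_num
  have hF : B (B (F m) n) s + B (B m (F n)) s + B (B m n) (F s) = 0 := by
    rw [← LinearMap.add_apply, ← map_add, ← h.derF, ← h.derF, h.bracket_bracket_eq_zero hm hn hs,
      map_zero]
  have hEL : E (B (B m (F n)) (F s)) = sg pm pn • B (B n (F m)) s := calc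
    E (B (B m (F n)) (F s)) = B (B m n) (F s) + B (B m (F n)) s := by
      rw [h.derE, h.derE, h.E_eq_zero_of_apply_eq_self hm, h.E_F_of_apply_eq_self hn,
        h.E_F_of_apply_eq_self hs, map_zero, LinearMap.zero_apply, zero_add]
    _ = -B (B (F m) n) s := by linear_combination (norm := module) hF
    _ = sg pm pn • B (B n (F m)) s := by
      rw [h.antisymm pm pn (F m) (h.evenF pm m hmg) n hng, map_neg, map_smul,
        LinearMap.neg_apply, LinearMap.smul_apply, neg_neg]
  rw [← h.F_E_of_apply_eq_neg hL, hEL, map_smul]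

end ShortSL2

/-- In a short `sl₂`-Lie superalgebra the triple product
`(m,n,r) = −[[m, f n], r]` satisfies the super Jordan-triple-like identity
`(m,n,(r,s,t)) = ((m,n,r),s,t) + (−1)^{|r|(|m|+|n|)+|m||n|}(r,(n,m,s),t)
 + (−1)^{(|m|+|n|)(|r|+|s|)}(r,s,(m,n,t))`. -/
theorem shortSL2_trip_SJT6
    {G : Type} [AddCommGroup G] [Module ℂ G]
    (gr : ZMod 2 → Submodule ℂ G)
    (B : G →ₗ[ℂ] G →ₗ[ℂ] G) (E F H : G →ₗ[ℂ] G)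
    (h : ShortSL2 gr B E F H) :
    ∀ pm pn pr ps pt : ZMod 2,
      ∀ m ∈ gr pm, ∀ n ∈ gr pn, ∀ r ∈ gr pr, ∀ s ∈ gr ps, ∀ t ∈ gr pt,
      H m = m → H n = n → H r = r → H s = s → H t = t →
      trip B F m n (trip B F r s t)
        = trip B F (trip B F m n r) s t
          + (sg pr (pm + pn) * sg pm pn) • trip B F r (trip B F n m s) t
          + sg (pm + pn) (pr + ps) • trip B F r s (trip B F m n t) := by
  intro pm pn pr ps pt m hmg n hng r hrg s hsg t _ hm hn _ hs _
  have ha : B m (F n) ∈ gr (pm + pn) := h.bracket_grade _ _ _ hmg _ (h.evenF _ _ hng)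
  have hy : B r (F s) ∈ gr (pr + ps) := h.bracket_grade _ _ _ hrg _ (h.evenF _ _ hsg)
  have expand := h.jacobi _ _ _ ha _ hy t
  rw [h.jacobi _ _ _ ha _ hrg (F s), h.bracket_bracket_F_F hmg hng hm hn hs] at expand
  simp only [trip, map_neg, map_add, map_smul, LinearMap.neg_apply, LinearMap.add_apply,
    LinearMap.smul_apply, neg_neg, smul_smul] at expand ⊢
  rw [expand, sg_comm pr]
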